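/- Let A be a k-algebra with invertible elements E, F, K and central element C satisfying the relations of a class subalgebra of a linked unipotent lifting: E^n, F^n nonzero scalars, K^N = κ, EF − FE = η(K^{−m} − K^m), KE = θEK, KF = θ^{−1}FK, with N = n (i.e. m = 1), and suppose {E^iF^jK^l : 0 ≤ i,j,l < n} is a basis. Then A ≅ M_n(k[C]), the n×n matrix algebra over the commutative subalgebra generated by the Casimir element C = EF − (η/(q−1))(K + qK^{−1}). -/

import Mathlib

/-!
Rescaling by `n`-th roots of `β` and `κ` turns `F` and `K` into `w` and `v` with `vⁿ = wⁿ = 1` and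
`w v = θ v w`. The spectral idempotents `eᵢ` of `v` are permuted cyclically by `w`, so
`eᵢⱼ = eᵢ w^(j - i)` is a complete system of matrix units. The Casimir element `C` commutes with
`E`, `F` and `K`, which generate `A`, so `k[C]` is central and `(rᵢⱼ) ↦ ∑ rᵢⱼ eᵢⱼ` is an injective
algebra map `Mₙ(k[C]) → A`. It is onto since `E = (C + η/(θ-1) (K + θK⁻¹)) F⁻¹`, so that `C`, `F`
and `K` generate `A`.
-/

open Finset

section MatrixUnits

variable {k A ι : Type*} [CommSemiring k] [Semiring A] [Algebra k A] [Fintype ι] [DecidableEq ι]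

structure IsMatrixUnits (e : ι → ι → A) : Prop where
  mul_eq : ∀ i j s t, e i j * e s t = if j = s then e i t else 0
  sum_diag : ∑ i, e i i = 1

variable (R : Subalgebra k A) (e : ι → ι → A)

def matrixUnitsLinearMap : Matrix ι ι R →ₗ[k] A where
  toFun M := ∑ i, ∑ j, (M i j : A) * e i j
  map_add' M N := by simp [add_mul, sum_add_distrib]
  map_smul' c M := by simp [smul_sum]

variable {R e}

theorem matrixUnitsLinearMap_single (i j : ι) (r : R) :
    matrixUnitsLinearMap R e (Matrix.single i j r) = r * e i j := by
  simp [matrixUnitsLinearMap, Matrix.single_apply, apply_ite (fun x : R => (x : A)), ite_mul,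
    ite_and]

theorem matrixUnitsLinearMap_one (he1 : ∑ i, e i i = 1) : matrixUnitsLinearMap R e 1 = 1 := by
  simp [matrixUnitsLinearMap, Matrix.one_apply, apply_ite (fun x : R => (x : A)), ite_mul, he1]

theorem matrixUnitsLinearMap_mul (hR : R ≤ Subalgebra.center k A)
    (he : ∀ i j s t, e i j * e s t = if j = s then e i t else 0) (M N : Matrix ι ι R) :
    matrixUnitsLinearMap R e (M * N) =
      matrixUnitsLinearMap R e M * matrixUnitsLinearMap R e N := by
  have hcomm (r : R) (a : A) : a * r = r * a := Subalgebra.mem_center_iff.mp (hR r.2) a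
  have hterm (i j s t : ι) : (M i j : A) * e i j * ((N s t : A) * e s t) =
      if j = s then (M i j : A) * N j t * e i t else 0 := by
    rw [mul_assoc, ← mul_assoc (e i j), hcomm, mul_assoc, he]
    split_ifs with h <;> simp [h, mul_assoc]
  simp only [matrixUnitsLinearMap, LinearMap.coe_mk, AddHom.coe_mk, sum_mul_sum, hterm,
    Matrix.mul_apply, sum_ite_irrel, sum_const_zero, sum_ite_eq', mem_univ, if_true]
  push_cast
  simp only [sum_mul]
  exact sum_congr rfl fun i _ => sum_comm

theorem sum_mul_matrixUnitsLinearMap_mul (hR : R ≤ Subalgebra.center k A) (he : IsMatrixUnits e)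
    (M : Matrix ι ι R) (s t : ι) :
    ∑ i, e i s * matrixUnitsLinearMap R e M * e t i = M s t := by
  have hcomm (r : R) (a : A) : a * r = r * a := Subalgebra.mem_center_iff.mp (hR r.2) a
  have hterm (i a b : ι) : e i s * ((M a b : A) * e a b) * e t i =
      if s = a ∧ b = t then (M s t : A) * e i i else 0 := by
    rw [← mul_assoc, hcomm, mul_assoc, mul_assoc, he.mul_eq]
    by_cases hb : b = t <;> by_cases ha : s = a <;> simp [hb, ha, he.mul_eq]
  simp only [matrixUnitsLinearMap, LinearMap.coe_mk, AddHom.coe_mk, mul_sum, sum_mul, hterm]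
  simp [ite_and]
  rw [← mul_sum, he.sum_diag, mul_one]

def matrixUnitsHom (hR : R ≤ Subalgebra.center k A) (he : IsMatrixUnits e) :
    Matrix ι ι R →ₐ[k] A :=
  AlgHom.ofLinearMap (matrixUnitsLinearMap R e) (matrixUnitsLinearMap_one he.sum_diag)
    (matrixUnitsLinearMap_mul hR he.mul_eq)

variable (hR : R ≤ Subalgebra.center k A) (he : IsMatrixUnits e)

theorem matrixUnitsHom_injective : Function.Injective (matrixUnitsHom hR he) := by
  intro M N h
  ext s t
  rw [← sum_mul_matrixUnitsLinearMap_mul hR he M, ← sum_mul_matrixUnitsLinearMap_mul hR he N]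
  exact congrArg (fun x => ∑ i, e i s * x * e t i) h

theorem matrixUnitsHom_surjective
    (hgen : Algebra.adjoin k ((R : Set A) ∪ Set.range (Function.uncurry e)) = ⊤) :
    Function.Surjective (matrixUnitsHom hR he) := by
  rw [← AlgHom.range_eq_top, eq_top_iff, ← hgen, Algebra.adjoin_le_iff]
  rintro _ (hr | ⟨⟨i, j⟩, rfl⟩)
  · refine ⟨∑ i, Matrix.single i i ⟨_, hr⟩, ?_⟩
    simp [matrixUnitsHom, matrixUnitsLinearMap_single, ← mul_sum, he.sum_diag]
  · exact ⟨Matrix.single i j 1, by simp [matrixUnitsHom, matrixUnitsLinearMap_single]⟩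

noncomputable def matrixUnitsEquiv
    (hgen : Algebra.adjoin k ((R : Set A) ∪ Set.range (Function.uncurry e)) = ⊤) :
    Matrix ι ι R ≃ₐ[k] A :=
  AlgEquiv.ofBijective (matrixUnitsHom hR he)
    ⟨matrixUnitsHom_injective hR he, matrixUnitsHom_surjective hR he hgen⟩

end MatrixUnits

section ZModPow

variable {M : Type*} [Monoid M] {n : ℕ} {x : M}

theorem pow_val_one_of_pow_eq_one (hx : x ^ n = 1) : x ^ (1 : ZMod n).val = x := by
  rw [ZMod.val_one_eq_one_mod, ← pow_eq_pow_mod _ hx, pow_one]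

variable [NeZero n]

theorem pow_val_add_of_pow_eq_one (hx : x ^ n = 1) (a b : ZMod n) :
    x ^ (a + b).val = x ^ a.val * x ^ b.val := by
  rw [ZMod.val_add, ← pow_add, ← pow_eq_pow_mod _ hx]

theorem AddChar.map_zmod_eq_pow (χ : AddChar (ZMod n) M) (a : ZMod n) :
    χ a = χ 1 ^ a.val := by
  conv_lhs => rw [← ZMod.natCast_zmod_val a]
  rw [← nsmul_one, AddChar.map_nsmul_eq_pow]

end ZModPow

theorem mul_pow_eq_smul_of_mul_eq_smul {k A : Type*} [CommSemiring k] [Semiring A] [Algebra k A]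
    {v w : A} {c : k} (h : w * v = c • (v * w)) (m : ℕ) :
    w * v ^ m = c ^ m • (v ^ m * w) := by
  induction m with
  | zero => simp
  | succ m ih =>
    rw [pow_succ v, ← mul_assoc, ih, smul_mul_assoc, mul_assoc, h, mul_smul_comm, smul_smul,
      ← pow_succ, ← mul_assoc, ← pow_succ]

section WeylPair

variable {k A : Type*} [Field k] [Ring A] [Algebra k A] {n : ℕ} [NeZero n]

/-- Fourier inversion on `ZMod n`: the projection onto the `χ i`-eigenspace of `v` when `vⁿ = 1`. -/
noncomputable def clockIdempotent (χ : AddChar (ZMod n) k) (v : A) (i : ZMod n) : A :=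
  (n : k)⁻¹ • ∑ l : ZMod n, χ (-(i * l)) • v ^ l.val

variable {χ : AddChar (ZMod n) k} {v w : A}

theorem mul_clockIdempotent (hv : v ^ n = 1) (i : ZMod n) :
    v * clockIdempotent χ v i = χ i • clockIdempotent χ v i := by
  have hcoef (l : ZMod n) : χ (-(i * l)) = χ i * χ (-(i * (1 + l))) := by
    rw [← AddChar.map_add_eq_mul]; ring_nf
  calc v * clockIdempotent χ v i
      = (n : k)⁻¹ • ∑ l : ZMod n, (χ i * χ (-(i * (1 + l)))) • v ^ (1 + l).val := by
        simp only [clockIdempotent, mul_smul_comm, mul_sum, pow_val_add_of_pow_eq_one hv,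
          pow_val_one_of_pow_eq_one hv, ← hcoef]
    _ = (n : k)⁻¹ • ∑ l : ZMod n, (χ i * χ (-(i * l))) • v ^ l.val :=
        congrArg _ <| Equiv.sum_comp (Equiv.addLeft 1) fun l => (χ i * χ (-(i * l))) • v ^ l.val
    _ = χ i • clockIdempotent χ v i := by
        simp only [clockIdempotent, smul_sum, smul_smul, mul_left_comm (χ i)]

theorem pow_val_mul_clockIdempotent (hv : v ^ n = 1) (l i : ZMod n) :
    v ^ l.val * clockIdempotent χ v i = χ (i * l) • clockIdempotent χ v i := by
  have hpow (m : ℕ) : v ^ m * clockIdempotent χ v i = χ i ^ m • clockIdempotent χ v i := by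
    induction m with
    | zero => simp
    | succ m ih =>
      rw [pow_succ', mul_assoc, ih, mul_smul_comm, mul_clockIdempotent hv, smul_smul, pow_succ]
  rw [hpow, ← AddChar.map_nsmul_eq_pow, nsmul_eq_mul, ZMod.natCast_zmod_val, mul_comm]

theorem clockIdempotent_mul_shift (hvw : w * v = χ 1 • (v * w)) (i : ZMod n) :
    clockIdempotent χ v i * w = w * clockIdempotent χ v (i + 1) := by
  have hcoef (l : ZMod n) : χ (-(i * l)) = χ (-((i + 1) * l)) * χ 1 ^ l.val := by
    rw [← AddChar.map_zmod_eq_pow, ← AddChar.map_add_eq_mul]; ring_nf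
  simp only [clockIdempotent, smul_mul_assoc, mul_smul_comm, sum_mul, mul_sum,
    mul_pow_eq_smul_of_mul_eq_smul hvw, smul_smul, hcoef]

theorem clockIdempotent_mul_pow_val (hvw : w * v = χ 1 • (v * w)) (i a : ZMod n) :
    clockIdempotent χ v i * w ^ a.val = w ^ a.val * clockIdempotent χ v (i + a) := by
  have hpow (m : ℕ) : clockIdempotent χ v i * w ^ m = w ^ m * clockIdempotent χ v (i + m) := by
    induction m with
    | zero => simp
    | succ m ih =>
      rw [pow_succ, ← mul_assoc, ih, mul_assoc, clockIdempotent_mul_shift hvw, ← mul_assoc,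
        ← pow_succ, Nat.cast_succ, add_assoc]
  rw [hpow, ZMod.natCast_zmod_val]

variable [NeZero (n : k)]

theorem clockIdempotent_mul_clockIdempotent (hχ : χ.IsPrimitive) (hv : v ^ n = 1) (i j : ZMod n) :
    clockIdempotent χ v i * clockIdempotent χ v j =
      if i = j then clockIdempotent χ v i else 0 := by
  have hcoef (l : ZMod n) : χ (-(i * l)) * χ (j * l) = χ (l * (j - i)) := by
    rw [← AddChar.map_add_eq_mul]; ring_nf
  nth_rewrite 1 [clockIdempotent]
  simp only [smul_mul_assoc, sum_mul, pow_val_mul_clockIdempotent hv, smul_smul, hcoef,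
    ← sum_smul, AddChar.sum_mulShift _ hχ, sub_eq_zero, eq_comm (a := j), ZMod.card]
  split_ifs with h
  · rw [h, inv_mul_cancel₀ (NeZero.ne _), one_smul]
  · simp

theorem sum_clockIdempotent (hχ : χ.IsPrimitive) : ∑ i, clockIdempotent χ v i = 1 := by
  have hsum (l : ZMod n) : ∑ i, χ (-(i * l)) = if l = 0 then (n : k) else 0 := by
    simp_rw [← mul_neg]
    rw [AddChar.sum_mulShift _ hχ]
    simp
  simp only [clockIdempotent, ← smul_sum]
  rw [sum_comm]
  simp only [← sum_smul, hsum, ite_smul, zero_smul, sum_ite_eq', mem_univ, if_true]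
  simp [NeZero.ne]

variable (χ v w) in
noncomputable def weylMatrixUnit (i j : ZMod n) : A :=
  clockIdempotent χ v i * w ^ (j - i).val

theorem weylMatrixUnit_mul (hχ : χ.IsPrimitive) (hv : v ^ n = 1) (hw : w ^ n = 1)
    (hvw : w * v = χ 1 • (v * w)) (i j s t : ZMod n) :
    weylMatrixUnit χ v w i j * weylMatrixUnit χ v w s t =
      if j = s then weylMatrixUnit χ v w i t else 0 := by
  have hmove : w ^ (j - i).val * clockIdempotent χ v s =
      clockIdempotent χ v (s - (j - i)) * w ^ (j - i).val := by
    rw [clockIdempotent_mul_pow_val hvw, sub_add_cancel]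
  simp only [weylMatrixUnit, mul_assoc, ← mul_assoc (w ^ _), hmove]
  rw [← mul_assoc (clockIdempotent χ v i), clockIdempotent_mul_clockIdempotent hχ hv]
  by_cases h : j = s
  · rw [if_pos (by rw [h]; ring), if_pos h, ← pow_val_add_of_pow_eq_one hw, h]
    ring_nf
  · rw [if_neg (fun h' => h (by linear_combination h')), if_neg h, zero_mul]

theorem sum_weylMatrixUnit_self (hχ : χ.IsPrimitive) :
    ∑ i, weylMatrixUnit χ v w i i = 1 := by
  simp [weylMatrixUnit, sum_clockIdempotent hχ]

theorem isMatrixUnits_weylMatrixUnit (hχ : χ.IsPrimitive) (hv : v ^ n = 1) (hw : w ^ n = 1)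
    (hvw : w * v = χ 1 • (v * w)) : IsMatrixUnits (weylMatrixUnit χ v w) :=
  ⟨weylMatrixUnit_mul hχ hv hw hvw, sum_weylMatrixUnit_self hχ⟩

theorem sum_smul_weylMatrixUnit_self (hχ : χ.IsPrimitive) (hv : v ^ n = 1) :
    ∑ i, χ i • weylMatrixUnit χ v w i i = v := by
  simp only [weylMatrixUnit, sub_self, ZMod.val_zero, pow_zero, mul_one, ← mul_clockIdempotent hv,
    ← mul_sum, sum_clockIdempotent hχ]

theorem sum_weylMatrixUnit_add_one (hχ : χ.IsPrimitive) (hw : w ^ n = 1) :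
    ∑ i, weylMatrixUnit χ v w i (i + 1) = w := by
  simp only [weylMatrixUnit, add_sub_cancel_left, pow_val_one_of_pow_eq_one hw, ← sum_mul,
    sum_clockIdempotent hχ, one_mul]

theorem mem_adjoin_weylMatrixUnit_left (hχ : χ.IsPrimitive) (hv : v ^ n = 1) :
    v ∈ Algebra.adjoin k (Set.range (Function.uncurry (weylMatrixUnit χ v w))) := by
  have h : ∑ i, χ i • weylMatrixUnit χ v w i i ∈
      Algebra.adjoin k (Set.range (Function.uncurry (weylMatrixUnit χ v w))) :=
    Subalgebra.sum_mem _ fun i _ =>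
      Subalgebra.smul_mem _ (Algebra.subset_adjoin (Set.mem_range_self (i, i))) _
  rwa [sum_smul_weylMatrixUnit_self hχ hv] at h

theorem mem_adjoin_weylMatrixUnit_right (hχ : χ.IsPrimitive) (hw : w ^ n = 1) :
    w ∈ Algebra.adjoin k (Set.range (Function.uncurry (weylMatrixUnit χ v w))) := by
  have h : ∑ i, weylMatrixUnit χ v w i (i + 1) ∈
      Algebra.adjoin k (Set.range (Function.uncurry (weylMatrixUnit χ v w))) :=
    Subalgebra.sum_mem _ fun i _ => Algebra.subset_adjoin ⟨(i, i + 1), rfl⟩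
  rwa [sum_weylMatrixUnit_add_one hχ hw] at h

end WeylPair

theorem exists_matrixUnits_of_pow_eq_smul_one {k A : Type*} [Field k] [IsAlgClosed k] [Ring A]
    [Algebra k A] {n : ℕ} [NeZero n] {ζ : kˣ} (hζ : IsPrimitiveRoot (ζ : k) n) {F K : A}
    {β κ : k} (hβ : β ≠ 0) (hκ : κ ≠ 0) (hF : F ^ n = β • 1) (hK : K ^ n = κ • 1)
    (hKF : K * F = ((ζ⁻¹ : kˣ) : k) • (F * K)) :
    ∃ e : ZMod n → ZMod n → A, IsMatrixUnits e ∧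
      F ∈ Algebra.adjoin k (Set.range (Function.uncurry e)) ∧
      K ∈ Algebra.adjoin k (Set.range (Function.uncurry e)) := by
  have := hζ.neZero'
  obtain ⟨b, rfl⟩ := IsAlgClosed.exists_pow_nat_eq β (Nat.pos_of_neZero n)
  obtain ⟨c, rfl⟩ := IsAlgClosed.exists_pow_nat_eq κ (Nat.pos_of_neZero n)
  have hb : b ≠ 0 := fun h => hβ (by simp [h, NeZero.ne n])
  have hc : c ≠ 0 := fun h => hκ (by simp [h, NeZero.ne n])
  set χ := AddChar.zmodChar n hζ.pow_eq_one
  have hχ : χ.IsPrimitive := AddChar.zmodChar_primitive_of_primitive_root n hζ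
  have hχ1 : χ 1 = ζ := by
    rw [AddChar.zmodChar_apply, pow_val_one_of_pow_eq_one hζ.pow_eq_one]
  have hv : (c⁻¹ • K) ^ n = 1 := by
    rw [smul_pow, hK, smul_smul, ← mul_pow, inv_mul_cancel₀ hc, one_pow, one_smul]
  have hw : (b⁻¹ • F) ^ n = 1 := by
    rw [smul_pow, hF, smul_smul, ← mul_pow, inv_mul_cancel₀ hb, one_pow, one_smul]
  have hvw : b⁻¹ • F * c⁻¹ • K = χ 1 • (c⁻¹ • K * b⁻¹ • F) := by
    have hFK : F * K = (ζ : k) • (K * F) := by rw [hKF, smul_smul, Units.mul_inv, one_smul]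
    rw [smul_mul_smul_comm, smul_mul_smul_comm, hFK, hχ1]
    module
  refine ⟨weylMatrixUnit χ (c⁻¹ • K) (b⁻¹ • F),
    isMatrixUnits_weylMatrixUnit hχ hv hw hvw, ?_, ?_⟩
  · have h := Subalgebra.smul_mem _ (mem_adjoin_weylMatrixUnit_right (v := c⁻¹ • K) hχ hw) b
    rwa [smul_inv_smul₀ hb] at h
  · have h := Subalgebra.smul_mem _ (mem_adjoin_weylMatrixUnit_left (w := b⁻¹ • F) hχ hv) c
    rwa [smul_inv_smul₀ hc] at h

theorem mul_smul_pow_pred_eq_one {k A : Type*} [Field k] [Ring A] [Algebra k A] {x : A} {c : k}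
    {n : ℕ} (hn : n ≠ 0) (hc : c ≠ 0) (hx : x ^ n = c • 1) :
    x * (c⁻¹ • x ^ (n - 1)) = 1 := by
  rw [mul_smul_comm, ← pow_succ', Nat.sub_add_cancel (Nat.one_le_iff_ne_zero.2 hn), hx,
    smul_smul, inv_mul_cancel₀ hc, one_smul]

theorem adjoin_eq_top_of_span_pow_mul_pow_mul_pow {k A ι : Type*} [CommSemiring k] [Semiring A]
    [Algebra k A] {E F K : A} (a b c : ι → ℕ)
    (h : Submodule.span k (Set.range fun t => E ^ a t * F ^ b t * K ^ c t) = ⊤) :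
    Algebra.adjoin k {E, F, K} = ⊤ := by
  refine Algebra.toSubmodule_eq_top.1 (top_unique (h ▸ Submodule.span_le.2 ?_))
  rintro _ ⟨t, rfl⟩
  have hpow (x : A) (hx : x ∈ ({E, F, K} : Set A)) (m : ℕ) :
      x ^ m ∈ Algebra.adjoin k {E, F, K} := pow_mem (Algebra.subset_adjoin hx) m
  exact (Subalgebra.mem_toSubmodule _).2
    (mul_mem (mul_mem (hpow _ (by simp) _) (hpow _ (by simp) _)) (hpow _ (by simp) _))

section Casimir

variable {k A : Type*} [Field k] [Ring A] [Algebra k A]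

def casimir (ζ : kˣ) (η : k) (E F : A) (K : Aˣ) : A :=
  E * F - (η / ((ζ : k) - 1)) • ((K : A) + (ζ : k) • ((K⁻¹ : Aˣ) : A))

variable {ζ : kˣ} {η : k} {E F : A} {K : Aˣ}

theorem Units.inv_mul_eq_smul_of_mul_eq_smul {c : kˣ} {x : A}
    (h : (K : A) * x = (c : k) • (x * K)) :
    ((K⁻¹ : Aˣ) : A) * x = ((c⁻¹ : kˣ) : k) • (x * ((K⁻¹ : Aˣ) : A)) := by
  rw [Units.inv_mul_eq_iff_eq_mul, mul_smul_comm, ← mul_assoc, h, smul_mul_assoc, mul_assoc,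
    Units.mul_inv, mul_one, smul_smul, Units.inv_mul, one_smul]

theorem commute_casimir_unit (hKE : (K : A) * E = (ζ : k) • (E * K))
    (hKF : (K : A) * F = ((ζ⁻¹ : kˣ) : k) • (F * K)) : Commute (casimir ζ η E F K) K := by
  have hEF : Commute (E * F) K := by
    rw [Commute, SemiconjBy, ← mul_assoc (K : A), hKE, smul_mul_assoc, mul_assoc E (K : A) F, hKF,
      mul_smul_comm, smul_smul, Units.mul_inv, one_smul, mul_assoc]
  exact hEF.sub_left (((Commute.refl _).add_left
    (((Commute.refl (K : A)).units_inv_left).smul_left _)).smul_left _)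

theorem commute_casimir_left (hζ : (ζ : k) ≠ 1)
    (hEF : E * F - F * E = η • (((K⁻¹ : Aˣ) : A) - K))
    (hKE : (K : A) * E = (ζ : k) • (E * K)) : Commute (casimir ζ η E F K) E := by
  have hFE : F * E = E * F - η • (((K⁻¹ : Aˣ) : A) - K) := by rw [← hEF]; abel
  have hK'E := Units.inv_mul_eq_smul_of_mul_eq_smul hKE
  have hζ' : (ζ : k) - 1 ≠ 0 := sub_ne_zero.2 hζ
  simp only [Commute, SemiconjBy, casimir, sub_mul, mul_sub, add_mul, mul_add, smul_mul_assoc,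
    mul_smul_comm, mul_assoc, hFE, hKE, hK'E, smul_sub, smul_add, smul_smul]
  rw [Units.val_inv_eq_inv_val]
  match_scalars <;> field_simp <;> ring

theorem commute_casimir_right (hζ : (ζ : k) ≠ 1)
    (hEF : E * F - F * E = η • (((K⁻¹ : Aˣ) : A) - K))
    (hKF : (K : A) * F = ((ζ⁻¹ : kˣ) : k) • (F * K)) : Commute (casimir ζ η E F K) F := by
  have hFE (x : A) : F * (E * x) = E * (F * x) - η • (((K⁻¹ : Aˣ) : A) * x - K * x) := by
    rw [← mul_assoc, show F * E = E * F - η • (((K⁻¹ : Aˣ) : A) - K) by rw [← hEF]; abel]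
    simp only [sub_mul, smul_mul_assoc, mul_assoc]
  have hK'F := Units.inv_mul_eq_smul_of_mul_eq_smul hKF
  have hζ' : (ζ : k) - 1 ≠ 0 := sub_ne_zero.2 hζ
  simp only [Commute, SemiconjBy, casimir, sub_mul, mul_sub, add_mul, mul_add, smul_mul_assoc,
    mul_smul_comm, mul_assoc, hFE, hKF, hK'F, smul_sub, smul_add, smul_smul, inv_inv]
  rw [Units.val_inv_eq_inv_val]
  match_scalars <;> field_simp <;> ring

theorem adjoin_casimir_le_center (hζ : (ζ : k) ≠ 1)
    (hEF : E * F - F * E = η • (((K⁻¹ : Aˣ) : A) - K))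
    (hKE : (K : A) * E = (ζ : k) • (E * K))
    (hKF : (K : A) * F = ((ζ⁻¹ : kˣ) : k) • (F * K))
    (hgen : Algebra.adjoin k {E, F, (K : A)} = ⊤) :
    Algebra.adjoin k {casimir ζ η E F K} ≤ Subalgebra.center k A := by
  rw [Algebra.adjoin_le_iff, Set.singleton_subset_iff, SetLike.mem_coe, Subalgebra.mem_center_iff]
  intro a
  have ha : a ∈ Algebra.adjoin k {E, F, (K : A)} := hgen ▸ Algebra.mem_top
  refine (Algebra.commute_of_mem_adjoin_of_forall_mem_commute ha ?_).eq.symm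
  simp only [Set.mem_insert_iff, Set.mem_singleton_iff, forall_eq_or_imp, forall_eq]
  exact ⟨commute_casimir_left hζ hEF hKE, commute_casimir_right hζ hEF hKF,
    commute_casimir_unit hKE hKF⟩

theorem adjoin_casimir_eq_top {n : ℕ} (hn : n ≠ 0) {β κ : k} (hβ : β ≠ 0) (hκ : κ ≠ 0)
    (hF : F ^ n = β • 1) (hK : (K : A) ^ n = κ • 1)
    (hgen : Algebra.adjoin k {E, F, (K : A)} = ⊤) :
    Algebra.adjoin k {casimir ζ η E F K, F, (K : A)} = ⊤ := by
  set S := Algebra.adjoin k {casimir ζ η E F K, F, (K : A)}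
  have hCS : casimir ζ η E F K ∈ S := Algebra.subset_adjoin (by simp)
  have hFS : F ∈ S := Algebra.subset_adjoin (by simp)
  have hKS : (K : A) ∈ S := Algebra.subset_adjoin (by simp)
  have hK'S : ((K⁻¹ : Aˣ) : A) ∈ S := by
    rw [Units.inv_eq_of_mul_eq_one_right (mul_smul_pow_pred_eq_one hn hκ hK)]
    exact S.smul_mem (pow_mem hKS _) _
  have hES : E ∈ S := by
    have hE : E = (casimir ζ η E F K +
        (η / ((ζ : k) - 1)) • ((K : A) + (ζ : k) • ((K⁻¹ : Aˣ) : A))) *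
          (β⁻¹ • F ^ (n - 1)) := by
      rw [casimir, sub_add_cancel, mul_assoc, mul_smul_pow_pred_eq_one hn hβ hF, mul_one]
    rw [hE]
    exact mul_mem (add_mem hCS (S.smul_mem (add_mem hKS (S.smul_mem hK'S _)) _))
      (S.smul_mem (pow_mem hFS _) _)
  rw [eq_top_iff, ← hgen, Algebra.adjoin_le_iff]
  simp [Set.insert_subset_iff, hES, hFS, hKS]

end Casimir

theorem unipotent_class_subalgebra_matrix_general (k : Type*) [Field k] [IsAlgClosed k]
    (A : Type*) [Ring A] [Algebra k A]
    (n : ℕ) (hn : 2 ≤ n) (θ : kˣ) (hθ : orderOf θ = n)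
    (η β κ : k) (hβ : β ≠ 0) (hκ : κ ≠ 0)
    (E F : A) (u : Aˣ)
    (hF : F ^ n = β • (1 : A))
    (hK : ((u : A)) ^ n = κ • (1 : A))
    (hEF : E * F - F * E = η • (((u⁻¹ : Aˣ) : A) - ((u : Aˣ) : A)))
    (hKE : (u : A) * E = ((θ : kˣ) : k) • (E * (u : A)))
    (hKF : (u : A) * F = ((θ⁻¹ : kˣ) : k) • (F * (u : A)))
    (hspan : Submodule.span k
      (Set.range fun t : Fin n × Fin n × Fin n =>
        E ^ (t.1 : ℕ) * F ^ (t.2.1 : ℕ) * ((u : A)) ^ (t.2.2 : ℕ)) = ⊤) :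
    Nonempty (A ≃ₐ[k] Matrix (Fin n) (Fin n)
      (Algebra.adjoin k
        ({E * F - (η / (((θ : kˣ) : k) - 1)) •
            (((u : Aˣ) : A) + ((θ : kˣ) : k) • ((u⁻¹ : Aˣ) : A))} : Set A))) := by
  have : NeZero n := ⟨by omega⟩
  have hθn : IsPrimitiveRoot (θ : k) n :=
    IsPrimitiveRoot.coe_units_iff.2 (IsPrimitiveRoot.iff_orderOf.2 hθ)
  have hgen := adjoin_eq_top_of_span_pow_mul_pow_mul_pow _ _ _ hspan
  have hcent := adjoin_casimir_le_center (η := η) (hθn.ne_one (by omega)) hEF hKE hKF hgen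
  obtain ⟨e, he, hFe, hue⟩ := exists_matrixUnits_of_pow_eq_smul_one hθn hβ hκ hF hK hKF
  have hS : Algebra.adjoin k ((Algebra.adjoin k {casimir θ η E F u} : Set A) ∪
      Set.range (Function.uncurry e)) = ⊤ := by
    rw [eq_top_iff, ← adjoin_casimir_eq_top (by omega) hβ hκ hF hK hgen, Algebra.adjoin_le_iff]
    have hmono := Algebra.adjoin_mono (R := k) (Set.subset_union_right
      (s := (Algebra.adjoin k {casimir θ η E F u} : Set A)) (t := Set.range (Function.uncurry e)))
    simp only [Set.insert_subset_iff, Set.singleton_subset_iff, SetLike.mem_coe]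
    exact ⟨Algebra.subset_adjoin (Or.inl (Algebra.self_mem_adjoin_singleton k _)), hmono hFe,
      hmono hue⟩
  exact ⟨(matrixUnitsEquiv hcent he hS).symm.trans
    (Matrix.reindexAlgEquiv k _ (ZMod.finEquiv n).symm.toEquiv)⟩

/-- Theorem 4.6: a class subalgebra of a linked unipotent lifting (with `m = 1`, so
`N = n`) is isomorphic to the `n×n` matrix algebra over the commutative subalgebra
generated by the Casimir element `C = EF − (η/(q−1))(K + qK⁻¹)`. -/
theorem unipotent_class_subalgebra_matrix (k : Type*) [Field k] [IsAlgClosed k] [CharZero k]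
    (A : Type*) [Ring A] [Algebra k A]
    (n : ℕ) (hn : 2 ≤ n) (θ : kˣ) (hθ : orderOf θ = n)
    (η α β κ : k) (hη : η ≠ 0) (hα : α ≠ 0) (hβ : β ≠ 0) (hκ : κ ≠ 0)
    (E F : A) (u : Aˣ)
    (hEu : IsUnit E) (hFu : IsUnit F)
    (hE : E ^ n = α • (1 : A)) (hF : F ^ n = β • (1 : A))
    (hK : ((u : A)) ^ n = κ • (1 : A))
    (hEF : E * F - F * E = η • (((u⁻¹ : Aˣ) : A) - ((u : Aˣ) : A)))
    (hKE : (u : A) * E = ((θ : kˣ) : k) • (E * (u : A)))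
    (hKF : (u : A) * F = ((θ⁻¹ : kˣ) : k) • (F * (u : A)))
    (hli : LinearIndependent k
      (fun t : Fin n × Fin n × Fin n =>
        E ^ (t.1 : ℕ) * F ^ (t.2.1 : ℕ) * ((u : A)) ^ (t.2.2 : ℕ)))
    (hspan : Submodule.span k
      (Set.range fun t : Fin n × Fin n × Fin n =>
        E ^ (t.1 : ℕ) * F ^ (t.2.1 : ℕ) * ((u : A)) ^ (t.2.2 : ℕ)) = ⊤) :
    Nonempty (A ≃ₐ[k] Matrix (Fin n) (Fin n)
      (Algebra.adjoin k
        ({E * F - (η / (((θ : kˣ) : k) - 1)) •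
            (((u : Aˣ) : A) + ((θ : kˣ) : k) • ((u⁻¹ : Aˣ) : A))} : Set A))) :=
  unipotent_class_subalgebra_matrix_general k A n hn θ hθ η β κ hβ hκ E F u hF hK hEF hKE hKF hspan
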